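/- arXiv:math/0504205 — 2 statements merged into one kernel-verified Lean document; each statement's English description precedes it below -/
import Mathlib

section
/- For every set A, every n ≥ 1, every partial n-place function f on A and every composition string L = [(i₁,y₁),…,(i_s,y_s)] of partial n-place functions in which every index 1,…,n occurs among i₁,…,i_s, the result of applying L to f equals the superposition f[μ₁(L) … μₙ(L)] as partial functions (both sides have the same domain and agree on it). -/
/-!
Let `μ̂ᵢ(L)` be `μᵢ(L)` when `i` occurs in `L` and the projection `ā ↦ aᵢ` otherwise. Then
`applyStr x L = x[μ̂₁(L) … μ̂ₙ(L)]` for every string `L`, the empty one included (both sides are `x`),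
by induction on `L`. The inductive step is the exchange law
`(f ∘ⱼ y)[G₁ … Gₙ] = f[G₁ … y[G₁ … Gₙ] … Gₙ]` (the new entry in position `j`): with `G = μ̂(L)` the
induction hypothesis for `y` reads `y[G] = applyStr y L = μ̂ⱼ((j, y) :: L)`, while `μ̂ᵢ` is unchanged
for `i ≠ j`. When every index occurs in `L`, `μ̂ = μ`.
-/

/-- A partial `n`-place function on `A`: a partial map from `Aⁿ` (i.e. `Fin n → A`) to `A`,
modelled as an `Option`-valued function (`none` = undefined). -/
abbrev NPlace (A : Type*) (n : ℕ) := (Fin n → A) → Option A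

/-- The domain of a partial `n`-place function. -/
def pdom {A : Type*} {n : ℕ} (f : NPlace A n) : Set (Fin n → A) :=
  {a | (f a).isSome}

/-- Superposition `f[g₁…gₙ]`: defined at `ā` exactly when every `gᵢ(ā)` is defined and
`(g₁(ā),…,gₙ(ā)) ∈ dom f`, with value `f(g₁(ā),…,gₙ(ā))`. -/
def superpose {A : Type*} {n : ℕ} (f : NPlace A n) (g : Fin n → NPlace A n) : NPlace A n :=
  fun a => if h : ∀ i, (g i a).isSome then f (fun i => (g i a).get (h i)) else none

/-- The binary composition `f ∘ᵢ g`: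
`(f ∘ᵢ g)(a₁,…,aₙ) = f(a₁,…,a_{i−1}, g(a₁,…,aₙ), a_{i+1},…,aₙ)`. -/
def opc {A : Type*} {n : ℕ} (i : Fin n) (f g : NPlace A n) : NPlace A n :=
  fun a => (g a).bind fun b => f (Function.update a i b)

/-- Applying a composition string `L = [(i₁,y₁),…,(i_s,y_s)]` to `f`:
`f ∘_{i₁} y₁ ∘_{i₂} y₂ ⋯ ∘_{i_s} y_s` (left to right). -/
def applyStr {A : Type*} {n : ℕ} (f : NPlace A n) (L : List (Fin n × NPlace A n)) : NPlace A n :=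
  L.foldl (fun x p => opc p.1 x p.2) f

/-- `μᵢ(L)`: if `i` occurs in the composition string `L` with least position `k`,
this is `some (yₖ ∘_{i_{k+1}} y_{k+1} ⋯ ∘_{i_s} y_s)`; otherwise `none`. -/
def mu {A : Type*} {n : ℕ} (i : Fin n) : List (Fin n × NPlace A n) → Option (NPlace A n)
  | [] => none
  | p :: rest => if p.1 = i then some (applyStr p.2 rest) else mu i rest

def proj {A : Type*} {n : ℕ} (i : Fin n) : NPlace A n := fun a => some (a i)

section Superposition

variable {A : Type*} {n : ℕ}

lemma superpose_apply_of_forall_eq_some {f : NPlace A n} {G : Fin n → NPlace A n}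
    {a b : Fin n → A} (hb : ∀ i, G i a = some (b i)) : superpose f G a = f b := by
  simp [superpose, hb]

lemma superpose_apply_eq_none {f : NPlace A n} {G : Fin n → NPlace A n} {a : Fin n → A}
    {i : Fin n} (hi : G i a = none) : superpose f G a = none := by
  have hG : ¬ ∀ i, (G i a).isSome := fun h => by simpa [hi] using h i
  simp only [superpose, dif_neg hG]

lemma superpose_proj (f : NPlace A n) : superpose f proj = f :=
  funext fun _ => superpose_apply_of_forall_eq_some fun _ => rfl

lemma superpose_opc (j : Fin n) (f y : NPlace A n) (G : Fin n → NPlace A n) :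
    superpose (opc j f y) G = superpose f (Function.update G j (superpose y G)) := by
  funext a
  have hupdate : ∀ i, Function.update G j (superpose y G) i a =
      if i = j then superpose y G a else G i a := fun i => by
    rw [Function.update_apply]; split_ifs <;> rfl
  by_cases hnone : ∃ i, G i a = none
  · obtain ⟨i, hi⟩ := hnone
    have hyG : superpose y G a = none := superpose_apply_eq_none hi
    rw [superpose_apply_eq_none hi, superpose_apply_eq_none (i := i)]
    rw [hupdate]; split_ifs <;> assumption
  · push Not at hnone
    choose b hb using fun i => Option.ne_none_iff_exists'.mp (hnone i)
    have hyG : superpose y G a = y b := superpose_apply_of_forall_eq_some hb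
    rw [superpose_apply_of_forall_eq_some hb, opc]
    cases hc : y b with
    | none =>
      exact (superpose_apply_eq_none (i := j) (by rw [hupdate, if_pos rfl, hyG, hc])).symm
    | some c =>
      refine (superpose_apply_of_forall_eq_some fun i => ?_).symm
      rw [hupdate, Function.update_apply]
      split_ifs
      · rw [hyG, hc]
      · exact hb i

lemma mu_cons_getD_proj (j : Fin n) (y : NPlace A n) (L : List (Fin n × NPlace A n)) :
    (fun i => (mu i ((j, y) :: L)).getD (proj i)) =
      Function.update (fun i => (mu i L).getD (proj i)) j (applyStr y L) := by
  funext i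
  rw [Function.update_apply]
  by_cases hij : j = i
  · subst hij; simp [mu]
  · simp [mu, hij, Ne.symm hij]

lemma applyStr_eq_superpose_mu_getD_proj (L : List (Fin n × NPlace A n)) (f : NPlace A n) :
    applyStr f L = superpose f (fun i => (mu i L).getD (proj i)) := by
  induction L generalizing f with
  | nil => exact (superpose_proj f).symm
  | cons p L ih =>
    obtain ⟨j, y⟩ := p
    calc applyStr f ((j, y) :: L)
        = superpose (opc j f y) (fun i => (mu i L).getD (proj i)) := ih (opc j f y)
      _ = superpose f (fun i => (mu i ((j, y) :: L)).getD (proj i)) := by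
        rw [superpose_opc, mu_cons_getD_proj, ← ih y]

end Superposition

theorem applyStr_eq_superpose_mu_general {A : Type*} {n : ℕ}
    (f : NPlace A n) (L : List (Fin n × NPlace A n))
    (h : ∀ i : Fin n, (mu i L).isSome) :
    applyStr f L = superpose f (fun i => (mu i L).get (h i)) := by
  rw [applyStr_eq_superpose_mu_getD_proj L f]
  congr 1
  funext i
  exact (Option.get_eq_getD _).symm

theorem applyStr_eq_superpose_mu {A : Type*} {n : ℕ} (hn : 1 ≤ n)
    (f : NPlace A n) (L : List (Fin n × NPlace A n)) (hL : L ≠ [])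
    (h : ∀ i : Fin n, (mu i L).isSome) :
    applyStr f L = superpose f (fun i => (mu i L).get (h i)) :=
  applyStr_eq_superpose_mu_general f L h
end

section
/- For every set A, every n ≥ 1, every partial n-place function f on A, every composition string L of partial n-place functions, and every index j ∈ {1,…,n} occurring in L: dom(result of applying L to f) ⊆ dom μⱼ(L). -/
/- The first occurrence `(j, y)` in `L` splits the string as `L = L₁ ++ (j, y) :: L₂`. Domains
only shrink along composition strings: `dom (x ∘ᵢ g) ⊆ dom g`, and `x ↦ x ∘ᵢ g` is monotone in
`dom x`. Hence `dom (f·L) = dom ((f·L₁ ∘ⱼ y)·L₂) ⊆ dom (y·L₂) = dom μⱼ(L)`. -/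

section

variable {A : Type*} {n : ℕ}

lemma pdom_opc_subset_right (i : Fin n) (f g : NPlace A n) : pdom (opc i f g) ⊆ pdom g := by
  intro a ha
  simp only [pdom, opc, Set.mem_ofPred_eq] at ha ⊢
  cases hg : g a <;> simp_all

lemma pdom_opc_mono (i : Fin n) {f g : NPlace A n} (h : pdom f ⊆ pdom g) (y : NPlace A n) :
    pdom (opc i f y) ⊆ pdom (opc i g y) := by
  intro a ha
  simp only [pdom, opc, Set.mem_ofPred_eq] at ha ⊢
  cases hy : y a with
  | none => simp [hy] at ha
  | some b =>
    simp only [hy, Option.bind_some] at ha ⊢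
    exact h ha

lemma pdom_applyStr_mono {f g : NPlace A n} (h : pdom f ⊆ pdom g) :
    ∀ L, pdom (applyStr f L) ⊆ pdom (applyStr g L)
  | [] => h
  | p :: L => pdom_applyStr_mono (pdom_opc_mono p.1 h p.2) L

lemma applyStr_cons (f : NPlace A n) (p : Fin n × NPlace A n) (L : List (Fin n × NPlace A n)) :
    applyStr f (p :: L) = applyStr (opc p.1 f p.2) L :=
  rfl

end

theorem pdom_applyStr_subset_mu_general {A : Type*} {n : ℕ}
    (f : NPlace A n) (L : List (Fin n × NPlace A n))
    (j : Fin n) (m : NPlace A n) (hm : mu j L = some m) :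
    pdom (applyStr f L) ⊆ pdom m := by
  induction L generalizing f with
  | nil => simp [mu] at hm
  | cons p L ih =>
    rw [applyStr_cons]
    by_cases hp : p.1 = j
    · rw [mu, if_pos hp, Option.some_inj] at hm
      subst hm
      exact pdom_applyStr_mono (pdom_opc_subset_right p.1 f p.2) L
    · rw [mu, if_neg hp] at hm
      exact ih (opc p.1 f p.2) hm

theorem pdom_applyStr_subset_mu {A : Type*} {n : ℕ} (hn : 1 ≤ n)
    (f : NPlace A n) (L : List (Fin n × NPlace A n)) (hL : L ≠ [])
    (j : Fin n) (m : NPlace A n) (hm : mu j L = some m) :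
    pdom (applyStr f L) ⊆ pdom m :=
  pdom_applyStr_subset_mu_general f L j m hm
end
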